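/- Let p(λ) = ∫₀^∞ e^{−x} ∏_{i=1}^∞ (1 − e^{−x−λi})² dx for λ > 0. Then lim_{λ → 0⁺} p(λ)/λ = 1/2. -/

import Mathlib

open Real Filter MeasureTheory Set Topology

/-!
With `t = e^{-x}` the `i`-th factor is `(1 - s_i)²`, where `s_i = t e^{-λ(i+1)}` and
`∑ s_i = t / (e^λ - 1)`. Since `-s / (1 - δ) ≤ log (1 - s) ≤ -s` for `0 ≤ s ≤ δ < 1`, the product
lies below `exp (-a t)` and, once `t ≤ δ`, above `exp (-a t / (1 - δ))`, where `a = 2 / (e^λ - 1)`.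
Against `e^{-x} dx` both bounds integrate in closed form,
`∫_L^∞ e^{-x} exp (-a e^{-x}) dx = (1 - exp (-a e^{-L})) / a`, which gives
`(1 - δ) (e^λ - 1) / 2 · (1 - exp (-2δ / ((1 - δ)(e^λ - 1)))) ≤ p(λ) ≤ (e^λ - 1) / 2`.
Divide by `λ`, let `λ → 0⁺` (so `(e^λ - 1) / λ → 1`), and then `δ → 0`.
-/

section InfiniteProduct

variable {ι : Type*} {s : ι → ℝ} {σ : ℝ}

theorem neg_div_one_sub_le_log_one_sub {s δ : ℝ} (hs : 0 ≤ s) (hsδ : s ≤ δ) (hδ : δ < 1) :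
    -(s / (1 - δ)) ≤ log (1 - s) := by
  have hs1 : 0 < 1 - s := by linarith
  have h := one_sub_inv_le_log_of_pos hs1
  have : s / (1 - s) ≤ s / (1 - δ) :=
    div_le_div_of_nonneg_left hs (by linarith) (by linarith)
  rw [show 1 - (1 - s)⁻¹ = -(s / (1 - s)) by field_simp; ring] at h
  linarith

theorem summable_log_one_sub (hs : Summable s) : Summable fun i => log (1 - s i) := by
  simpa [sub_eq_add_neg] using Real.summable_log_one_add_of_summable hs.neg

theorem tprod_one_sub_sq_eq_exp (hs1 : ∀ i, s i < 1) (hs : Summable s) :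
    ∏' i, (1 - s i) ^ 2 = exp (2 * ∑' i, log (1 - s i)) := by
  have hlog : ∀ i, log ((1 - s i) ^ 2) = 2 * log (1 - s i) := fun i => by
    rw [Real.log_pow]; norm_num
  rw [← tsum_mul_left, ← Real.rexp_tsum_eq_tprod (fun i => pow_pos (sub_pos.2 (hs1 i)) 2)]
  · simp only [hlog]
  · simpa only [hlog] using (summable_log_one_sub hs).mul_left 2

theorem tprod_one_sub_sq_le_exp (hs1 : ∀ i, s i < 1) (hs : HasSum s σ) :
    ∏' i, (1 - s i) ^ 2 ≤ exp (-2 * σ) := by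
  rw [tprod_one_sub_sq_eq_exp hs1 hs.summable, exp_le_exp]
  have : ∑' i, log (1 - s i) ≤ -σ :=
    hasSum_le (fun i => by linarith [log_le_sub_one_of_pos (sub_pos.2 (hs1 i))])
      (summable_log_one_sub hs.summable).hasSum hs.neg
  linarith

theorem exp_le_tprod_one_sub_sq {δ : ℝ} (hs0 : ∀ i, 0 ≤ s i) (hsδ : ∀ i, s i ≤ δ) (hδ : δ < 1)
    (hs : HasSum s σ) : exp (-2 * σ / (1 - δ)) ≤ ∏' i, (1 - s i) ^ 2 := by
  rw [tprod_one_sub_sq_eq_exp (fun i => (hsδ i).trans_lt hδ) hs.summable, exp_le_exp]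
  have : -(σ / (1 - δ)) ≤ ∑' i, log (1 - s i) :=
    hasSum_le (fun i => neg_div_one_sub_le_log_one_sub (hs0 i) (hsδ i) hδ)
      (hs.div_const _).neg (summable_log_one_sub hs.summable).hasSum
  rw [mul_div_assoc]
  linarith

end InfiniteProduct

theorem hasSum_exp_neg_sub_mul_succ (x : ℝ) {l : ℝ} (hl : 0 < l) :
    HasSum (fun i : ℕ => exp (-x - l * ((i : ℝ) + 1))) (exp (-x) / (exp l - 1)) := by
  have hq : exp (-l) < 1 := exp_lt_one_iff.2 (by linarith)
  have hterm :
      (fun i : ℕ => exp (-x - l * ((i : ℝ) + 1))) = fun i => exp (-x - l) * exp (-l) ^ i := by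
    funext i
    rw [← exp_nat_mul, ← exp_add]
    ring_nf
  have hsum : exp (-x) / (exp l - 1) = exp (-x - l) * (1 - exp (-l))⁻¹ := by
    have : exp l - 1 ≠ 0 := by linarith [add_one_lt_exp hl.ne']
    rw [exp_sub, exp_neg l]
    field_simp
  rw [hterm, hsum]
  exact (hasSum_geometric_of_lt_one (exp_pos _).le hq).mul_left _

theorem tprod_one_sub_exp_sq_le {l x : ℝ} (hl : 0 < l) (hx : 0 ≤ x) :
    ∏' i : ℕ, (1 - exp (-x - l * ((i : ℝ) + 1))) ^ 2 ≤ exp (-(2 / (exp l - 1) * exp (-x))) := by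
  have hs1 (i : ℕ) : exp (-x - l * ((i : ℝ) + 1)) < 1 :=
    exp_lt_one_iff.2 (by linarith [show 0 < l * ((i : ℝ) + 1) by positivity])
  convert tprod_one_sub_sq_le_exp hs1 (hasSum_exp_neg_sub_mul_succ x hl) using 2
  ring

theorem exp_le_tprod_one_sub_exp_sq {l x δ : ℝ} (hl : 0 < l) (hδ : δ < 1) (hxδ : exp (-x) ≤ δ) :
    exp (-(2 / ((1 - δ) * (exp l - 1)) * exp (-x)))
      ≤ ∏' i : ℕ, (1 - exp (-x - l * ((i : ℝ) + 1))) ^ 2 := by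
  have hsx (i : ℕ) : exp (-x - l * ((i : ℝ) + 1)) ≤ exp (-x) :=
    exp_le_exp.2 (by linarith [show 0 < l * ((i : ℝ) + 1) by positivity])
  have hl' : exp l - 1 ≠ 0 := by linarith [one_lt_exp_iff.2 hl]
  calc exp (-(2 / ((1 - δ) * (exp l - 1)) * exp (-x)))
      = exp (-2 * (exp (-x) / (exp l - 1)) / (1 - δ)) := by
        congr 1
        field_simp [sub_ne_zero.2 hδ.ne']
    _ ≤ _ := exp_le_tprod_one_sub_sq (fun i => (exp_pos _).le) (fun i => (hsx i).trans hxδ) hδ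
        (hasSum_exp_neg_sub_mul_succ x hl)

theorem hasDerivAt_exp_neg_mul_exp_neg_div {a : ℝ} (ha : a ≠ 0) (x : ℝ) :
    HasDerivAt (fun x => exp (-(a * exp (-x))) / a) (exp (-x) * exp (-(a * exp (-x)))) x := by
  have h := ((((hasDerivAt_neg x).exp).const_mul a).fun_neg.exp).div_const a
  refine h.congr_deriv ?_
  field_simp

theorem tendsto_exp_neg_mul_exp_neg_div_atTop (a : ℝ) :
    Tendsto (fun x => exp (-(a * exp (-x))) / a) atTop (𝓝 (1 / a)) := by
  have h : Continuous fun t => exp (-(a * t)) / a := by fun_prop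
  simpa [Function.comp_def] using (h.tendsto 0).comp tendsto_exp_neg_atTop_nhds_zero

theorem integrableOn_Ioi_exp_neg_mul_exp_neg_mul_exp_neg {a : ℝ} (ha : a ≠ 0) (L : ℝ) :
    IntegrableOn (fun x => exp (-x) * exp (-(a * exp (-x)))) (Ioi L) :=
  integrableOn_Ioi_deriv_of_nonneg' (fun x _ => hasDerivAt_exp_neg_mul_exp_neg_div ha x)
    (fun x _ => by positivity) (tendsto_exp_neg_mul_exp_neg_div_atTop a)

theorem integral_Ioi_exp_neg_mul_exp_neg_mul_exp_neg {a : ℝ} (ha : a ≠ 0) (L : ℝ) :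
    ∫ x in Ioi L, exp (-x) * exp (-(a * exp (-x))) = (1 - exp (-(a * exp (-L)))) / a := by
  rw [integral_Ioi_of_hasDerivAt_of_nonneg' (fun x _ => hasDerivAt_exp_neg_mul_exp_neg_div ha x)
    (fun x _ => by positivity) (tendsto_exp_neg_mul_exp_neg_div_atTop a)]
  ring

theorem tendsto_exp_sub_one_div_nhdsNE : Tendsto (fun l => (exp l - 1) / l) (𝓝[≠] 0) (𝓝 1) := by
  have h := hasDerivAt_iff_tendsto_slope.1 (hasDerivAt_exp 0)
  rw [exp_zero] at h
  refine h.congr fun l => ?_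
  simp [slope_def_field]

theorem tendsto_inv_exp_sub_one_nhdsGT : Tendsto (fun l => (exp l - 1)⁻¹) (𝓝[>] 0) atTop := by
  refine tendsto_inv_nhdsGT_zero.comp (tendsto_nhdsWithin_iff.2 ⟨?_, ?_⟩)
  · have h : Continuous fun l => exp l - 1 := by fun_prop
    simpa using (h.tendsto 0).mono_left nhdsWithin_le_nhds
  · filter_upwards [self_mem_nhdsWithin] with l hl
    exact sub_pos.2 (one_lt_exp_iff.2 hl)

noncomputable def coneContactProb (l : ℝ) : ℝ :=
  ∫ x in Ioi (0 : ℝ), exp (-x) * ∏' i : ℕ, (1 - exp (-x - l * ((i : ℝ) + 1))) ^ 2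

section ConeContactProb

variable {l : ℝ}

theorem integrableOn_coneContactProb_integrand (hl : 0 < l) :
    IntegrableOn (fun x => exp (-x) * ∏' i : ℕ, (1 - exp (-x - l * ((i : ℝ) + 1))) ^ 2)
      (Ioi 0) := by
  refine (integrableOn_Ioi_exp_neg_mul_exp_neg_mul_exp_neg (a := 2 / (exp l - 1)) ?_ 0).mono'
    (by fun_prop) ?_
  · have := one_lt_exp_iff.2 hl
    exact div_ne_zero two_ne_zero (by linarith)
  filter_upwards [ae_restrict_mem measurableSet_Ioi] with x hx
  rw [norm_mul, Real.norm_of_nonneg (exp_pos _).le,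
    Real.norm_of_nonneg (tprod_nonneg fun i => sq_nonneg _)]
  exact mul_le_mul_of_nonneg_left (tprod_one_sub_exp_sq_le hl (le_of_lt hx)) (exp_pos _).le

theorem coneContactProb_le (hl : 0 < l) : coneContactProb l ≤ (exp l - 1) / 2 := by
  have ha : 0 < 2 / (exp l - 1) := div_pos two_pos (sub_pos.2 (one_lt_exp_iff.2 hl))
  calc coneContactProb l
      ≤ ∫ x in Ioi 0, exp (-x) * exp (-(2 / (exp l - 1) * exp (-x))) :=
        setIntegral_mono_on (integrableOn_coneContactProb_integrand hl)
          (integrableOn_Ioi_exp_neg_mul_exp_neg_mul_exp_neg ha.ne' 0) measurableSet_Ioi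
          fun x hx => mul_le_mul_of_nonneg_left (tprod_one_sub_exp_sq_le hl (le_of_lt hx))
            (exp_pos _).le
    _ = (1 - exp (-(2 / (exp l - 1) * exp (-0)))) / (2 / (exp l - 1)) :=
        integral_Ioi_exp_neg_mul_exp_neg_mul_exp_neg ha.ne' 0
    _ ≤ 1 / (2 / (exp l - 1)) := by gcongr; linarith [exp_pos (-(2 / (exp l - 1) * exp (-0)))]
    _ = (exp l - 1) / 2 := one_div_div _ _

theorem le_coneContactProb (hl : 0 < l) {δ : ℝ} (hδ0 : 0 < δ) (hδ1 : δ < 1) :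
    (1 - δ) * (exp l - 1) / 2 * (1 - exp (-(2 * δ / (1 - δ) * (exp l - 1)⁻¹)))
      ≤ coneContactProb l := by
  set b := 2 / ((1 - δ) * (exp l - 1))
  have hb : 0 < b := div_pos two_pos (mul_pos (by linarith) (sub_pos.2 (one_lt_exp_iff.2 hl)))
  set L := -log δ
  have hL : 0 ≤ L := neg_nonneg.2 (log_nonpos hδ0.le hδ1.le)
  have hexpL : exp (-L) = δ := by rw [neg_neg, exp_log hδ0]
  have hF := integrableOn_coneContactProb_integrand hl
  calc (1 - δ) * (exp l - 1) / 2 * (1 - exp (-(2 * δ / (1 - δ) * (exp l - 1)⁻¹)))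
      = (1 - exp (-(b * exp (-L)))) / b := by
        have hbδ : b * δ = 2 * δ / (1 - δ) * (exp l - 1)⁻¹ := by
          simp only [b, div_eq_mul_inv, mul_inv]
          ring
        rw [hexpL, hbδ, div_eq_mul_inv _ b, inv_div, mul_comm]
    _ = ∫ x in Ioi L, exp (-x) * exp (-(b * exp (-x))) :=
        (integral_Ioi_exp_neg_mul_exp_neg_mul_exp_neg hb.ne' L).symm
    _ ≤ ∫ x in Ioi L, exp (-x) * ∏' i : ℕ, (1 - exp (-x - l * ((i : ℝ) + 1))) ^ 2 :=
        setIntegral_mono_on (integrableOn_Ioi_exp_neg_mul_exp_neg_mul_exp_neg hb.ne' L)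
          (hF.mono_set (Ioi_subset_Ioi hL)) measurableSet_Ioi fun x hx =>
            mul_le_mul_of_nonneg_left (exp_le_tprod_one_sub_exp_sq hl hδ1
              (hexpL ▸ exp_le_exp.2 (neg_le_neg (le_of_lt hx)))) (exp_pos _).le
    _ ≤ coneContactProb l :=
        setIntegral_mono_set hF
          (ae_of_all _ fun x => mul_nonneg (exp_pos _).le (tprod_nonneg fun i => sq_nonneg _))
          (Ioi_subset_Ioi hL).eventuallyLE

theorem eventually_lt_coneContactProb_div {δ b : ℝ} (hδ0 : 0 < δ) (hδ1 : δ < 1)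
    (hb : b < (1 - δ) / 2) : ∀ᶠ l in 𝓝[>] 0, b < coneContactProb l / l := by
  have hlower := ((tendsto_const_nhds (x := (1 - δ) / 2)).mul
    (tendsto_exp_sub_one_div_nhdsNE.mono_left (nhdsGT_le_nhdsNE 0))).mul
    ((tendsto_const_nhds (x := (1 : ℝ))).sub (tendsto_exp_neg_atTop_nhds_zero.comp
      (tendsto_inv_exp_sub_one_nhdsGT.const_mul_atTop (by positivity : 0 < 2 * δ / (1 - δ)))))
  rw [mul_one, sub_zero, mul_one] at hlower
  filter_upwards [self_mem_nhdsWithin, hlower.eventually_const_lt hb] with l hl hlt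
  refine hlt.trans_le ?_
  rw [le_div_iff₀ hl]
  calc _ = (1 - δ) * (exp l - 1) / 2 * (1 - exp (-(2 * δ / (1 - δ) * (exp l - 1)⁻¹))) := by
        simp only [Function.comp_apply]
        field_simp [(show 0 < l from hl).ne']
    _ ≤ coneContactProb l := le_coneContactProb hl hδ0 hδ1

theorem eventually_coneContactProb_div_lt {b : ℝ} (hb : 1 / 2 < b) :
    ∀ᶠ l in 𝓝[>] 0, coneContactProb l / l < b := by
  have hupper := (tendsto_exp_sub_one_div_nhdsNE.mono_left (nhdsGT_le_nhdsNE 0)).div_const 2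
  filter_upwards [self_mem_nhdsWithin, hupper.eventually_lt_const hb] with l hl hlt
  refine lt_of_le_of_lt ?_ hlt
  rw [div_right_comm]
  exact div_le_div_of_nonneg_right (coneContactProb_le hl) (le_of_lt hl)

end ConeContactProb

/-- With `p(λ) = ∫₀^∞ e^{-x} ∏_{i=1}^∞ (1 - e^{-x-λi})² dx`, one has
`p(λ)/λ → 1/2` as `λ → 0⁺`. -/
theorem tendsto_prob_div_lambda :
    Filter.Tendsto
      (fun l : ℝ =>
        (∫ x in Set.Ioi (0 : ℝ),
          Real.exp (-x) * ∏' i : ℕ, (1 - Real.exp (-x - l * ((i : ℝ) + 1))) ^ 2) / l)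
      (nhdsWithin 0 (Set.Ioi 0)) (nhds (1 / 2)) := by
  change Tendsto (fun l => coneContactProb l / l) (𝓝[>] 0) (𝓝 (1 / 2))
  refine tendsto_order.2 ⟨fun b hb => ?_, fun b hb => eventually_coneContactProb_div_lt hb⟩
  obtain ⟨δ, hδ0, hδ⟩ := exists_between (lt_min one_pos (by linarith : 0 < 1 - 2 * b))
  exact eventually_lt_coneContactProb_div hδ0 (hδ.trans_le (min_le_left _ _))
    (by linarith [hδ.trans_le (min_le_right _ _)])
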